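/- Derivative of the trace term with respect to the missing indicator at design point i (Appendix D): the map t ↦ tr( Z (Zᵀ (D + t·diag(e_i)) Z)⁻¹ Zᵀ ) from ℝ to ℝ has derivative −(R²)_{ii} at t = 0, where diag(e_i) is the N×N diagonal matrix whose only nonzero entry is a 1 in position (i,i), R := Z (Zᵀ D Z)⁻¹ Zᵀ, and (R²)_{ii} is the i-th diagonal entry of R·R. -/

import Mathlib

/-! The derivative of `t ↦ (A + tB)⁻¹` at `0` is `-A⁻¹ B A⁻¹`, and the trace is linear, so the
derivative of the trace term is `-tr (R E R)` with `E = diag(eᵢ)`; by cyclicity of the trace this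
is `-(R²)ᵢᵢ`. -/

open Matrix

section

variable {𝕜 : Type*} [NontriviallyNormedField 𝕜] {l m n o : Type*}
  [Fintype l] [Fintype m] [Fintype n] [Fintype o] {t : 𝕜}

/- Matrices carry no global norm. The `L∞` operator norm gives access to the calculus of normed
algebras; its topology is the product topology in which the statements below are read. -/
attribute [local instance] Matrix.linftyOpNormedAddCommGroup Matrix.linftyOpNormedSpace
  Matrix.linftyOpNormedRing Matrix.linftyOpNormedAlgebra

theorem Matrix.hasDerivAt_add_smul (A B : Matrix m n 𝕜) :
    HasDerivAt (fun s => A + s • B) B t := by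
  have h := ((hasDerivAt_id t).smul_const B).const_add A
  rwa [one_smul] at h

variable [CompleteSpace 𝕜]

theorem HasDerivAt.matrix_inv [DecidableEq n] {f : 𝕜 → Matrix n n 𝕜} {f' : Matrix n n 𝕜}
    (hf : HasDerivAt f f' t) (ht : IsUnit (f t).det) :
    HasDerivAt (fun s => (f s)⁻¹) (-((f t)⁻¹ * f' * (f t)⁻¹)) t := by
  -- not found by instance search: the two uniform structures agree only up to unfolding
  have : HasSummableGeomSeries (Matrix n n 𝕜) :=
    @instHasSummableGeomSeriesOfCompleteSpace _ _ (Matrix.instCompleteSpace _ _ _)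
  obtain ⟨u, hu⟩ := (Matrix.isUnit_iff_isUnit_det _).mpr ht
  have hinv := hasFDerivAt_ringInverse (𝕜 := 𝕜) u
  rw [hu] at hinv
  have key := hinv.comp_hasDerivAt t hf
  simp only [Function.comp_def, Matrix.coe_units_inv, hu,
    ← Matrix.nonsing_inv_eq_ringInverse] at key
  exact key

theorem HasDerivAt.matrix_mul_mul {f : 𝕜 → Matrix m n 𝕜} {f' : Matrix m n 𝕜}
    (hf : HasDerivAt f f' t) (A : Matrix l m 𝕜) (B : Matrix n o 𝕜) :
    HasDerivAt (fun s => A * f s * B) (A * f' * B) t :=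
  let L : Matrix m n 𝕜 →ₗ[𝕜] Matrix l o 𝕜 := mulRightLinearMap l 𝕜 B ∘ₗ mulLeftLinearMap n 𝕜 A
  L.toContinuousLinearMap.hasFDerivAt.comp_hasDerivAt t hf

theorem HasDerivAt.matrix_trace {f : 𝕜 → Matrix n n 𝕜} {f' : Matrix n n 𝕜}
    (hf : HasDerivAt f f' t) : HasDerivAt (fun s => (f s).trace) f'.trace t :=
  (Matrix.traceLinearMap n 𝕜 𝕜).toContinuousLinearMap.hasFDerivAt.comp_hasDerivAt t hf

end

theorem Matrix.trace_mul_diagonal_single_mul {R n m : Type*} [CommSemiring R] [Fintype n]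
    [Fintype m] [DecidableEq n] (A : Matrix m n R) (B : Matrix n m R) (i : n) :
    (A * diagonal (Pi.single i (1 : R)) * B).trace = (B * A) i i := by
  rw [diagonal_single, trace_mul_cycle, trace_mul_single]
  simp

theorem stmt_16 {N p : ℕ} (Z : Matrix (Fin N) (Fin p) ℝ)
    (d : Fin N → ℝ)
    (hdet : IsUnit (Zᵀ * Matrix.diagonal d * Z).det)
    (R : Matrix (Fin N) (Fin N) ℝ)
    (hR : R = Z * (Zᵀ * Matrix.diagonal d * Z)⁻¹ * Zᵀ)
    (i : Fin N) :
    HasDerivAt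
      (fun t : ℝ =>
        (Z * (Zᵀ * (Matrix.diagonal d + t • Matrix.diagonal (Pi.single i 1)) * Z)⁻¹ *
          Zᵀ).trace)
      (-((R * R) i i)) 0 := by
  have hgram := (hasDerivAt_add_smul (t := (0 : ℝ)) (diagonal d)
    (diagonal (Pi.single i 1))).matrix_mul_mul Zᵀ Z
  have hinv := hgram.matrix_inv (by simpa using hdet)
  refine (hinv.matrix_mul_mul Z Zᵀ).matrix_trace.congr_deriv ?_
  simp only [zero_smul, add_zero, Matrix.mul_neg, Matrix.neg_mul, trace_neg, neg_inj]
  rw [hR, ← trace_mul_diagonal_single_mul]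
  simp only [Matrix.mul_assoc]
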